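/- Let G = (V, E) be a directed graph with V nonempty. A term t over F_2 is accepted by the tree automaton C_G if and only if t = [A_{w_k} A_{w_{k−1}} … A_{w_1} A_{w_0}] for some k ≥ 1 and some vertices w_0, …, w_k ∈ V such that w_i = w_j for some pair of indices i ≠ j. -/
import Mathlib


/-- Terms over the ranked alphabet `F₂ = {h} ∪ {A_v : v ∈ V}` where `h` has
arity 2 and each `A_v` is a constant. -/
inductive T2 (V : Type*) : Type _
  | A : V → T2 V
  | h : T2 V → T2 V → T2 V

/-- `code k w` is the term `[A_{w_k} A_{w_{k-1}} … A_{w_1} A_{w_0}]`, i.e.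
`h(A_{w_k}, h(A_{w_{k-1}}, …, h(A_{w_1}, A_{w_0})…))`; for `k = 0` it is
just `A_{w_0}`. -/
def code {V : Type*} : (k : ℕ) → (Fin (k + 1) → V) → T2 V
  | 0, w => T2.A (w 0)
  | k + 1, w => T2.h (T2.A (w (Fin.last (k + 1)))) (code k (fun i => w i.castSucc))

/-- The states of the tree automaton `C_G`: `p_w` and `p_w'` for each vertex
`w`, together with `p₀`, `p₁` and the final state `p_f`. -/
inductive CState (V : Type*) : Type _
  | pw : V → CState V
  | pw' : V → CState V
  | p0 : CState V
  | p1 : CState V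
  | pf : CState V

/-- `CRun t p` means `t →*_{C_G} p` in the tree automaton `C_G`, whose rules
are: `A_w → p₀`, `A_w → p_w`, `A_w → p_w'` for each `w ∈ V`; `h(p₀,p₀) → p₁`;
`h(p₀,p₁) → p₁`; for each `w ∈ V`: `h(p_w,p₀) → p_w'`, `h(p_w,p₁) → p_w'`,
`h(p₀,p_w') → p_w'`, `h(p_w,p_w') → p_f`; and `h(p₀,p_f) → p_f`. -/
inductive CRun {V : Type*} : T2 V → CState V → Prop
  | a0 (w : V) : CRun (T2.A w) CState.p0
  | aw (w : V) : CRun (T2.A w) (CState.pw w)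
  | aw' (w : V) : CRun (T2.A w) (CState.pw' w)
  | h00 {t1 t2 : T2 V} : CRun t1 CState.p0 → CRun t2 CState.p0 →
      CRun (T2.h t1 t2) CState.p1
  | h01 {t1 t2 : T2 V} : CRun t1 CState.p0 → CRun t2 CState.p1 →
      CRun (T2.h t1 t2) CState.p1
  | hw0 {t1 t2 : T2 V} (w : V) : CRun t1 (CState.pw w) → CRun t2 CState.p0 →
      CRun (T2.h t1 t2) (CState.pw' w)
  | hw1 {t1 t2 : T2 V} (w : V) : CRun t1 (CState.pw w) → CRun t2 CState.p1 →
      CRun (T2.h t1 t2) (CState.pw' w)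
  | h0w' {t1 t2 : T2 V} (w : V) : CRun t1 CState.p0 → CRun t2 (CState.pw' w) →
      CRun (T2.h t1 t2) (CState.pw' w)
  | hww' {t1 t2 : T2 V} (w : V) : CRun t1 (CState.pw w) → CRun t2 (CState.pw' w) →
      CRun (T2.h t1 t2) CState.pf
  | h0f {t1 t2 : T2 V} : CRun t1 CState.p0 → CRun t2 CState.pf →
      CRun (T2.h t1 t2) CState.pf


section Aux
variable {V : Type*}

lemma code_snoc (k : ℕ) (w : Fin (k+1) → V) (a : V) :
    code (k+1) (Fin.snoc w a) = T2.h (T2.A a) (code k w) := by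
  simp [code, Fin.snoc_castSucc]

lemma run_p0 {t : T2 V} (h : CRun t CState.p0) : ∃ u, t = T2.A u := by
  cases h; exact ⟨_, rfl⟩

lemma run_pw {t : T2 V} {v : V} (h : CRun t (CState.pw v)) : t = T2.A v := by
  cases h; rfl

lemma run_p1 : ∀ t : T2 V, CRun t CState.p1 → ∃ k, 1 ≤ k ∧ ∃ w, t = code k w := by
  intro t
  induction t with
  | A u => intro h; cases h
  | h t1 t2 ih1 ih2 =>
    intro h
    cases h with
    | h00 h1 h2 =>
      obtain ⟨a, rfl⟩ := run_p0 h1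
      obtain ⟨b, rfl⟩ := run_p0 h2
      exact ⟨1, le_refl 1, ![b, a], rfl⟩
    | h01 h1 h2 =>
      obtain ⟨a, rfl⟩ := run_p0 h1
      obtain ⟨k, hk, w, rfl⟩ := ih2 h2
      exact ⟨k+1, by omega, Fin.snoc w a, (code_snoc k w a).symm⟩

lemma run_code_p1 : ∀ (k : ℕ) (w : Fin (k+1) → V), 1 ≤ k → CRun (code k w) CState.p1 := by
  intro k
  induction k with
  | zero => intro w h; omega
  | succ k ih =>
    intro w _
    cases k with
    | zero => exact CRun.h00 (CRun.a0 _) (CRun.a0 _)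
    | succ m => exact CRun.h01 (CRun.a0 _) (ih _ (by omega))

lemma run_code_pw' : ∀ (k : ℕ) (w : Fin (k+1) → V) (i : Fin (k+1)),
    CRun (code k w) (CState.pw' (w i)) := by
  intro k
  induction k with
  | zero =>
    intro w i
    have : i = 0 := Fin.fin_one_eq_zero i
    subst this
    exact CRun.aw' _
  | succ k ih =>
    intro w i
    by_cases hi : i = Fin.last (k+1)
    · subst hi
      cases k with
      | zero => exact CRun.hw0 _ (CRun.aw _) (CRun.a0 _)
      | succ m => exact CRun.hw1 _ (CRun.aw _) (run_code_p1 _ _ (by omega))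
    · obtain ⟨i', rfl⟩ := Fin.exists_castSucc_eq.2 hi
      exact CRun.h0w' _ (CRun.a0 _) (ih (fun j => w j.castSucc) i')

lemma run_pw'_fwd : ∀ (t : T2 V) (v : V), CRun t (CState.pw' v) →
    ∃ k w, t = code k w ∧ ∃ i, w i = v := by
  intro t
  induction t with
  | A u =>
    intro v h
    cases h
    exact ⟨0, fun _ => u, rfl, 0, rfl⟩
  | h t1 t2 ih1 ih2 =>
    intro v h
    cases h with
    | hw0 _ h1 h2 =>
      obtain rfl := run_pw h1
      obtain ⟨b, rfl⟩ := run_p0 h2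
      exact ⟨1, ![b, v], rfl, 1, rfl⟩
    | hw1 _ h1 h2 =>
      obtain rfl := run_pw h1
      obtain ⟨k, hk, w, rfl⟩ := run_p1 _ h2
      exact ⟨k+1, Fin.snoc w v, (code_snoc k w v).symm, Fin.last (k+1), Fin.snoc_last ..⟩
    | h0w' _ h1 h2 =>
      obtain ⟨a, rfl⟩ := run_p0 h1
      obtain ⟨k, w, rfl, i, hi⟩ := ih2 _ h2
      exact ⟨k+1, Fin.snoc w a, (code_snoc k w a).symm, i.castSucc,
        by simpa [Fin.snoc_castSucc] using hi⟩

lemma run_pf_fwd : ∀ t : T2 V, CRun t CState.pf →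
    ∃ k, 1 ≤ k ∧ ∃ w, t = code k w ∧ ∃ i j, i ≠ j ∧ w i = w j := by
  intro t
  induction t with
  | A u => intro h; cases h
  | h t1 t2 ih1 ih2 =>
    intro h
    cases h with
    | hww' v h1 h2 =>
      obtain rfl := run_pw h1
      obtain ⟨k, w, rfl, i, hi⟩ := run_pw'_fwd _ _ h2
      refine ⟨k+1, by omega, Fin.snoc w v, (code_snoc k w v).symm,
        i.castSucc, Fin.last (k+1), (Fin.castSucc_lt_last i).ne, ?_⟩
      simp [Fin.snoc_castSucc, Fin.snoc_last, hi]
    | h0f h1 h2 =>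
      obtain ⟨a, rfl⟩ := run_p0 h1
      obtain ⟨k, hk, w, rfl, i, j, hij, hw⟩ := ih2 h2
      refine ⟨k+1, by omega, Fin.snoc w a, (code_snoc k w a).symm,
        i.castSucc, j.castSucc, ?_, ?_⟩
      · simpa [Fin.castSucc_inj] using hij
      · simp [Fin.snoc_castSucc, hw]

lemma accept_of_lt : ∀ (k : ℕ) (w : Fin (k+1) → V) (i j : Fin (k+1)),
    i < j → w i = w j → CRun (code k w) CState.pf := by
  intro k
  induction k with
  | zero =>
    intro w i j hij _
    have hi := i.isLt
    have hj := j.isLt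
    omega
  | succ k ih =>
    intro w i j hij hw
    by_cases hj : j = Fin.last (k+1)
    · subst hj
      obtain ⟨i', rfl⟩ := Fin.exists_castSucc_eq.2 hij.ne
      refine CRun.hww' _ (CRun.aw _) ?_
      rw [← hw]
      exact run_code_pw' k (fun j => w j.castSucc) i'
    · obtain ⟨j', rfl⟩ := Fin.exists_castSucc_eq.2 hj
      have hi' : i < Fin.last (k+1) := lt_trans hij (Fin.castSucc_lt_last j')
      obtain ⟨i', rfl⟩ := Fin.exists_castSucc_eq.2 hi'.ne
      refine CRun.h0f (CRun.a0 _) ?_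
      exact ih (fun j => w j.castSucc) i' j' (by simpa using hij) hw

end Aux


/-- Let `G = (V, E)` with `V` finite and nonempty. A term `t` over `F₂` is
accepted by `C_G` (i.e. reaches the final state `p_f`) iff
`t = [A_{w_k} A_{w_{k-1}} … A_{w_1} A_{w_0}]` for some `k ≥ 1` and some
vertices `w_0, …, w_k ∈ V` with `w_i = w_j` for some pair of indices `i ≠ j`. -/


theorem CG_accepts_iff {V : Type*} [Fintype V] [Nonempty V] (E : V → V → Prop)
    (t : T2 V) :
    CRun t CState.pf ↔
    ∃ k : ℕ, 1 ≤ k ∧ ∃ w : Fin (k + 1) → V, t = code k w ∧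
      ∃ i j : Fin (k + 1), i ≠ j ∧ w i = w j := by
  constructor
  · intro h
    exact run_pf_fwd t h
  · rintro ⟨k, hk, w, rfl, i, j, hij, hw⟩
    rcases lt_or_gt_of_ne hij with h | h
    · exact accept_of_lt k w i j h hw
    · exact accept_of_lt k w j i h hw.symm
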